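/- For every t ∈ (0,1], the equation 2√t·(1 − Φ(x)) = φ(x) admits a unique real solution x, and this solution satisfies x < 2√t. -/

import Mathlib

open Real MeasureTheory Set Filter

/-- Standard normal distribution function `Φ`. -/
noncomputable def normCdf (x : ℝ) : ℝ := ∫ u in Iic x, exp (-u ^ 2 / 2) / sqrt (2 * π)

/-- Standard normal density `φ`. -/
noncomputable def normPdf (x : ℝ) : ℝ := exp (-x ^ 2 / 2) / sqrt (2 * π)

lemma sqrt_two_pi_pos : 0 < sqrt (2 * π) :=
  Real.sqrt_pos.2 (by positivity)

lemma normPdf_pos (x : ℝ) : 0 < normPdf x :=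
  div_pos (exp_pos _) sqrt_two_pi_pos

lemma normPdf_cont : Continuous normPdf := by
  unfold normPdf
  fun_prop

lemma normPdf_integrable : Integrable normPdf := by
  have h : Integrable (fun x : ℝ => exp (-(1/2 : ℝ) * x ^ 2)) :=
    integrable_exp_neg_mul_sq (by norm_num)
  have h2 := h.div_const (sqrt (2 * π))
  refine h2.congr (Filter.Eventually.of_forall fun x => ?_)
  unfold normPdf
  ring_nf

lemma integral_normPdf : ∫ x, normPdf x = 1 := by
  have h : (fun x : ℝ => normPdf x) = fun x => exp (-(1/2 : ℝ) * x ^ 2) / sqrt (2 * π) := by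
    funext x; unfold normPdf; ring_nf
  rw [h, integral_div, integral_gaussian]
  rw [show π / (1/2 : ℝ) = 2 * π by ring]
  exact div_self (ne_of_gt sqrt_two_pi_pos)

lemma normCdf_eq (x : ℝ) : normCdf x = normCdf 0 + ∫ u in (0:ℝ)..x, normPdf u := by
  have h := intervalIntegral.integral_Iic_sub_Iic (μ := volume) (f := normPdf)
    (normPdf_integrable.integrableOn) (normPdf_integrable.integrableOn) (a := 0) (b := x)
  have hc : normCdf x = ∫ u in Iic x, normPdf u := rfl
  have hc0 : normCdf 0 = ∫ u in Iic (0:ℝ), normPdf u := rfl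
  rw [hc, hc0]
  linarith [h]

lemma normCdf_hasDerivAt (x : ℝ) : HasDerivAt normCdf (normPdf x) x := by
  have h : HasDerivAt (fun y => ∫ u in (0:ℝ)..y, normPdf u) (normPdf x) x :=
    intervalIntegral.integral_hasDerivAt_right
      (normPdf_integrable.intervalIntegrable)
      (normPdf_cont.stronglyMeasurableAtFilter _ _)
      (normPdf_cont.continuousAt)
  have h2 := h.const_add (normCdf 0)
  exact h2.congr_of_eventuallyEq (Filter.Eventually.of_forall fun y => normCdf_eq y)

lemma normCdf_strictMono : StrictMono normCdf := by
  refine strictMono_of_deriv_pos fun x => ?_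
  rw [(normCdf_hasDerivAt x).deriv]
  exact normPdf_pos x

lemma normPdf_hasDerivAt (x : ℝ) : HasDerivAt normPdf (-x * normPdf x) x := by
  have h1 : HasDerivAt (fun y : ℝ => -y ^ 2 / 2) (-x) x := by
    have := ((hasDerivAt_pow 2 x).neg).div_const 2
    refine this.congr_deriv ?_
    push_cast; ring
  have h2 : HasDerivAt (fun y : ℝ => exp (-y ^ 2 / 2)) (exp (-x ^ 2 / 2) * (-x)) x := h1.exp
  have h3 := h2.div_const (sqrt (2 * π))
  have : HasDerivAt normPdf (exp (-x ^ 2 / 2) * (-x) / sqrt (2 * π)) x := h3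
  convert this using 1
  unfold normPdf; ring

lemma normPdf_tendsto_atTop : Tendsto normPdf atTop (nhds 0) := by
  have h1 : Tendsto (fun x : ℝ => -x ^ 2 / 2) atTop atBot := by
    apply Tendsto.atBot_div_const (by norm_num)
    exact tendsto_neg_atTop_atBot.comp (tendsto_pow_atTop two_ne_zero)
  have h2 : Tendsto (fun x : ℝ => exp (-x ^ 2 / 2)) atTop (nhds 0) :=
    Real.tendsto_exp_atBot.comp h1
  have h3 := h2.div_const (sqrt (2 * π))
  rw [zero_div] at h3
  exact h3

lemma normPdf_neg (x : ℝ) : normPdf (-x) = normPdf x := by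
  unfold normPdf; ring_nf

lemma normPdf_tendsto_atBot : Tendsto normPdf atBot (nhds 0) := by
  have h := normPdf_tendsto_atTop.comp tendsto_neg_atBot_atTop
  refine h.congr fun x => ?_
  exact normPdf_neg x

lemma normCdf_tendsto_atTop : Tendsto normCdf atTop (nhds 1) := by
  have h : Tendsto (fun x : ℝ => ∫ u in (0:ℝ)..x, normPdf u) atTop
      (nhds (∫ u in Ioi (0:ℝ), normPdf u)) :=
    intervalIntegral_tendsto_integral_Ioi 0 (normPdf_integrable.integrableOn) tendsto_id
  have h2 := (tendsto_const_nhds (x := normCdf 0) (f := atTop (α := ℝ))).add h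
  have hsum : normCdf 0 + ∫ u in Ioi (0:ℝ), normPdf u = 1 := by
    have := intervalIntegral.integral_Iic_add_Ioi (μ := volume) (b := (0:ℝ))
      (normPdf_integrable.integrableOn) (normPdf_integrable.integrableOn)
    rw [show normCdf 0 = ∫ u in Iic (0:ℝ), normPdf u from rfl, this, integral_normPdf]
  rw [hsum] at h2
  exact h2.congr fun x => (normCdf_eq x).symm

lemma normCdf_le_one (x : ℝ) : normCdf x ≤ 1 := by
  refine ge_of_tendsto normCdf_tendsto_atTop ?_
  filter_upwards [eventually_ge_atTop x] with z hz
  exact normCdf_strictMono.monotone hz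

lemma normCdf_lt_one (x : ℝ) : normCdf x < 1 :=
  lt_of_lt_of_le (normCdf_strictMono (lt_add_one x)) (normCdf_le_one (x + 1))

/-- For `t ∈ (0,1]`, the equation `2√t·(1 − Φ(x)) = φ(x)` has a unique real
solution, and this solution is `< 2√t`. -/
theorem stmt10 (t : ℝ) (ht0 : 0 < t) (ht1 : t ≤ 1) :
    ∃ x : ℝ, (2 * sqrt t * (1 - normCdf x) = normPdf x ∧ x < 2 * sqrt t)
      ∧ ∀ y : ℝ, 2 * sqrt t * (1 - normCdf y) = normPdf y → y = x := by
  set a : ℝ := sqrt t with ha_def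
  have ha : 0 < a := Real.sqrt_pos.2 ht0
  set F : ℝ → ℝ := fun x => 2 * a * (1 - normCdf x) - normPdf x with hF_def
  -- derivative of F
  have hFd : ∀ x, HasDerivAt F ((x - 2 * a) * normPdf x) x := by
    intro x
    have h1 : HasDerivAt (fun x => 2 * a * (1 - normCdf x)) (2 * a * (-(normPdf x))) x :=
      (((normCdf_hasDerivAt x).const_sub 1)).const_mul (2 * a)
    have h2 := h1.sub (normPdf_hasDerivAt x)
    refine h2.congr_deriv ?_
    ring
  have hFc : Continuous F := by
    have : Differentiable ℝ F := fun x => (hFd x).differentiableAt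
    exact this.continuous
  -- F is strictly decreasing on Iic (2a)
  have hanti : StrictAntiOn F (Iic (2 * a)) := by
    refine strictAntiOn_of_deriv_neg (convex_Iic _) hFc.continuousOn fun x hx => ?_
    rw [interior_Iic] at hx
    rw [(hFd x).deriv]
    exact mul_neg_of_neg_of_pos (sub_neg.2 hx) (normPdf_pos x)
  -- F is strictly increasing on Ici (2a)
  have hmono : StrictMonoOn F (Ici (2 * a)) := by
    refine strictMonoOn_of_deriv_pos (convex_Ici _) hFc.continuousOn fun x hx => ?_
    rw [interior_Ici] at hx
    rw [(hFd x).deriv]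
    exact mul_pos (sub_pos.2 hx) (normPdf_pos x)
  -- F tends to 0 at +∞
  have hF0 : Tendsto F atTop (nhds 0) := by
    have h1 : Tendsto (fun x => 2 * a * (1 - normCdf x)) atTop (nhds (2 * a * (1 - 1))) :=
      (tendsto_const_nhds.sub normCdf_tendsto_atTop).const_mul (2 * a)
    have h3 := h1.sub normPdf_tendsto_atTop
    simpa using h3
  -- F ≤ 0 on Ici (2a)
  have hFle : ∀ x, 2 * a ≤ x → F x ≤ 0 := by
    intro x hx
    refine ge_of_tendsto hF0 ?_
    filter_upwards [eventually_ge_atTop x] with z hz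
    exact hmono.monotoneOn hx (le_trans hx hz) hz
  -- F < 0 on Ici (2a)
  have hFlt : ∀ x, 2 * a ≤ x → F x < 0 := by
    intro x hx
    exact lt_of_lt_of_le (hmono hx (le_trans hx (by linarith)) (by linarith))
      (hFle (x + 1) (by linarith))
  -- a point to the left where F > 0
  have hx0 : ∃ x₀, x₀ < 2 * a ∧ 0 < F x₀ := by
    set c : ℝ := 2 * a * (1 - normCdf 0) with hc_def
    have hc : 0 < c :=
      mul_pos (by linarith) (by linarith [normCdf_lt_one 0])
    have h1 : ∀ᶠ x in atBot, normPdf x < c :=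
      normPdf_tendsto_atBot.eventually_lt_const hc
    have h2 : ∀ᶠ x in atBot, x ≤ (0:ℝ) := eventually_le_atBot 0
    have h3 : ∀ᶠ x in atBot, x < 2 * a := eventually_lt_atBot (2 * a)
    obtain ⟨x₀, hp, hle, hlt⟩ := (h1.and (h2.and h3)).exists
    refine ⟨x₀, hlt, ?_⟩
    have hmon : normCdf x₀ ≤ normCdf 0 := normCdf_strictMono.monotone hle
    have : c ≤ 2 * a * (1 - normCdf x₀) := by
      apply mul_le_mul_of_nonneg_left (by linarith) (by linarith)
    simp only [hF_def]
    linarith [hp]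
  obtain ⟨x₀, hx₀lt, hx₀pos⟩ := hx0
  -- intermediate value theorem on [x₀, 2a]
  have hivt : ∃ x ∈ Icc x₀ (2 * a), F x = 0 := by
    have hsub := intermediate_value_Icc' (le_of_lt hx₀lt) hFc.continuousOn
    have h0mem : (0:ℝ) ∈ Icc (F (2 * a)) (F x₀) :=
      ⟨le_of_lt (hFlt (2 * a) le_rfl), le_of_lt hx₀pos⟩
    obtain ⟨x, hx, hfx⟩ := hsub h0mem
    exact ⟨x, hx, hfx⟩
  obtain ⟨x, ⟨hxl, hxr⟩, hFx⟩ := hivt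
  have hxlt : x < 2 * a := by
    rcases lt_or_eq_of_le hxr with h | h
    · exact h
    · exfalso; rw [h] at hFx; exact absurd hFx (ne_of_lt (hFlt (2 * a) le_rfl))
  refine ⟨x, ⟨?_, hxlt⟩, ?_⟩
  · have : F x = 0 := hFx
    simp only [hF_def] at this
    linarith
  · intro y hy
    have hFy : F y = 0 := by simp only [hF_def]; linarith
    have hylt : y < 2 * a := by
      by_contra h
      push_neg at h
      exact absurd hFy (ne_of_lt (hFlt y h))
    exact hanti.injOn (le_of_lt hylt) (le_of_lt hxlt) (hFy.trans hFx.symm)
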